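/- arXiv:2405.18142 — 3 statements merged into one kernel-verified Lean document; each statement's English description precedes it below -/
import Mathlib

section
/- Let Φ_x ∈ ℝ^{(T+1)n×(T+1)n} and Φ_u ∈ ℝ^{(T+1)m×(T+1)n} be block lower triangular, write Φ = [Φ_x; Φ_u] (vertical stack), and let ΔA ∈ ℝ^{n×n}, ΔB ∈ ℝ^{n×m} be arbitrary, with Δℳ = [blkdiag_{T+1}(ΔA) blkdiag_{T+1}(ΔB)]. Then the matrix ZΔℳΦ ∈ ℝ^{(T+1)n×(T+1)n} is nilpotent with (ZΔℳΦ)^{T+1} = 0, and consequently both I + ZΔℳΦ and I + ΦZΔℳ are invertible. -/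
open MeasureTheory Matrix
open scoped ENNReal

/-- The ℓ¹-norm of a vector. -/
noncomputable def l1norm {ι : Type*} [Fintype ι] (v : ι → ℝ) : ℝ := ∑ i, |v i|

/-- The induced ℓ¹-norm of a matrix (maximum absolute column sum). -/
noncomputable def matL1 {ι κ : Type*} [Fintype ι] [Fintype κ] (M : Matrix ι κ ℝ) : ℝ :=
  ⨆ j, ∑ i, |M i j|

/-- The Wasserstein-1 distance (w.r.t. the ℓ¹-norm): infimum over couplings of the expected
ℓ¹-distance. -/
noncomputable def wass {ι : Type*} [Fintype ι] (P Q : Measure (ι → ℝ)) : ℝ :=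
  sInf { r | ∃ π : Measure ((ι → ℝ) × (ι → ℝ)),
    IsProbabilityMeasure π ∧ π.map Prod.fst = P ∧ π.map Prod.snd = Q ∧
    r = ∫ p, l1norm (p.1 - p.2) ∂π }

/-- The uniform empirical measure `(1/N) ∑ᵢ δ_{a i}`. -/
noncomputable def emp {ι : Type*} [Fintype ι] {N : ℕ} (a : Fin N → (ι → ℝ)) :
    Measure (ι → ℝ) :=
  (N : ℝ≥0∞)⁻¹ • ∑ i, Measure.dirac (a i)

/-- The block-downshift matrix `Z`, with `n × n` identity blocks on the first block
subdiagonal and zero blocks elsewhere. -/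
noncomputable def dshift (T n : ℕ) : Matrix (Fin (T+1) × Fin n) (Fin (T+1) × Fin n) ℝ :=
  fun p q => if (p.1 : ℕ) = (q.1 : ℕ) + 1 ∧ p.2 = q.2 then 1 else 0

/-- `blkdiag T M`: block-diagonal matrix with `T+1` copies of `M` on the diagonal. -/
noncomputable def blkdiag (T : ℕ) {n m : ℕ} (M : Matrix (Fin n) (Fin m) ℝ) :
    Matrix (Fin (T+1) × Fin n) (Fin (T+1) × Fin m) ℝ :=
  fun p q => if p.1 = q.1 then M p.2 q.2 else 0

/-- A block-partitioned matrix is block lower triangular: all blocks strictly above the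
block diagonal are zero. -/
def BlockLT {T n m : ℕ} (M : Matrix (Fin (T+1) × Fin m) (Fin (T+1) × Fin n) ℝ) : Prop :=
  ∀ p q, p.1 < q.1 → M p q = 0

/-!
Multiplying the block lower triangular `ΔℳΦ` by the downshift `Z` makes it strictly block
lower triangular, and a strictly block lower triangular matrix with `T + 1` block rows is
nilpotent of index at most `T + 1`. Invertibility of `I + ZΔℳΦ` follows, and that of
`I + ΦZΔℳ` by the Weinstein–Aronszajn identity `det (1 + AB) = det (1 + BA)`.
-/

theorem Matrix.pow_eq_zero_of_apply_eq_zero_of_fst_le {R ι : Type*} [Semiring R] [Fintype ι]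
    [DecidableEq ι] {T : ℕ} (M : Matrix (Fin (T + 1) × ι) (Fin (T + 1) × ι) R)
    (hM : ∀ p q, p.1 ≤ q.1 → M p q = 0) : M ^ (T + 1) = 0 := by
  have hpow : ∀ k (p q : Fin (T + 1) × ι), (p.1 : ℕ) < q.1 + k → (M ^ k) p q = 0 := by
    intro k
    induction k with
    | zero =>
      intro p q hpq
      exact one_apply_ne (by rintro rfl; omega)
    | succ k ih =>
      intro p q hpq
      rw [pow_succ, mul_apply]
      refine Finset.sum_eq_zero fun r _ => ?_
      by_cases hpr : (p.1 : ℕ) < r.1 + k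
      · rw [ih p r hpr, zero_mul]
      · rw [hM r q (Fin.le_def.mpr (by omega)), mul_zero]
  ext p q
  exact hpow (T + 1) p q (by have := p.1.isLt; omega)

theorem Matrix.isUnit_one_add_mul_comm {R α β : Type*} [CommRing R] [Fintype α] [Fintype β]
    [DecidableEq α] [DecidableEq β] (A : Matrix α β R) (B : Matrix β α R) :
    IsUnit (1 + A * B) ↔ IsUnit (1 + B * A) := by
  rw [isUnit_iff_isUnit_det, isUnit_iff_isUnit_det, det_one_add_mul_comm]

namespace BlockLT

variable {T n m k : ℕ}

theorem add {M N : Matrix (Fin (T + 1) × Fin m) (Fin (T + 1) × Fin n) ℝ}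
    (hM : BlockLT M) (hN : BlockLT N) : BlockLT (M + N) := fun p q hpq => by
  rw [Matrix.add_apply, hM p q hpq, hN p q hpq, add_zero]

theorem blkdiag_mul (D : Matrix (Fin k) (Fin m) ℝ)
    {M : Matrix (Fin (T + 1) × Fin m) (Fin (T + 1) × Fin n) ℝ} (hM : BlockLT M) :
    BlockLT (blkdiag T D * M) := by
  intro p q hpq
  rw [mul_apply]
  refine Finset.sum_eq_zero fun r _ => ?_
  by_cases hpr : p.1 = r.1
  · rw [hM r q (hpr ▸ hpq), mul_zero]
  · simp [blkdiag, hpr]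

theorem dshift_mul_apply_eq_zero {M : Matrix (Fin (T + 1) × Fin n) (Fin (T + 1) × Fin k) ℝ}
    (hM : BlockLT M) {p q} (hpq : p.1 ≤ q.1) : (dshift T n * M) p q = 0 := by
  rw [mul_apply]
  refine Finset.sum_eq_zero fun r _ => ?_
  by_cases hpr : (p.1 : ℕ) = r.1 + 1 ∧ p.2 = r.2
  · rw [hM r q (Fin.lt_def.mpr (by have := Fin.le_def.mp hpq; omega)), mul_zero]
  · simp [dshift, hpr]

end BlockLT

theorem stmt1_general {n m T : ℕ}
    (Φx : Matrix (Fin (T+1) × Fin n) (Fin (T+1) × Fin n) ℝ)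
    (Φu : Matrix (Fin (T+1) × Fin m) (Fin (T+1) × Fin n) ℝ)
    (hx : BlockLT Φx) (hu : BlockLT Φu)
    (ΔA : Matrix (Fin n) (Fin n) ℝ) (ΔB : Matrix (Fin n) (Fin m) ℝ)
    (Φ : Matrix ((Fin (T+1) × Fin n) ⊕ (Fin (T+1) × Fin m)) (Fin (T+1) × Fin n) ℝ)
    (hΦ : Φ = Matrix.fromRows Φx Φu)
    (ΔM : Matrix (Fin (T+1) × Fin n) ((Fin (T+1) × Fin n) ⊕ (Fin (T+1) × Fin m)) ℝ)
    (hΔM : ΔM = Matrix.fromCols (blkdiag T ΔA) (blkdiag T ΔB)) :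
    (dshift T n * ΔM * Φ) ^ (T+1) = 0 ∧
    IsUnit (1 + dshift T n * ΔM * Φ) ∧
    IsUnit (1 + Φ * dshift T n * ΔM) := by
  have hΔMΦ : BlockLT (ΔM * Φ) := by
    rw [hΔM, hΦ, fromCols_mul_fromRows]
    exact (hx.blkdiag_mul ΔA).add (hu.blkdiag_mul ΔB)
  have hpow : (dshift T n * ΔM * Φ) ^ (T + 1) = 0 := by
    rw [Matrix.mul_assoc]
    exact pow_eq_zero_of_apply_eq_zero_of_fst_le _ fun p q => hΔMΦ.dshift_mul_apply_eq_zero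
  have hunit : IsUnit (1 + dshift T n * ΔM * Φ) := IsNilpotent.isUnit_one_add ⟨T + 1, hpow⟩
  refine ⟨hpow, hunit, ?_⟩
  rw [Matrix.mul_assoc, isUnit_one_add_mul_comm]
  exact hunit

/-- For block lower triangular `Φx, Φu` and arbitrary model errors
`ΔA, ΔB`, the matrix `ZΔℳΦ` is nilpotent with `(ZΔℳΦ)^(T+1) = 0`, and consequently both
`I + ZΔℳΦ` and `I + ΦZΔℳ` are invertible. -/
theorem stmt1 {n m T : ℕ} (hn : 0 < n) (hm : 0 < m) (hT : 0 < T)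
    (Φx : Matrix (Fin (T+1) × Fin n) (Fin (T+1) × Fin n) ℝ)
    (Φu : Matrix (Fin (T+1) × Fin m) (Fin (T+1) × Fin n) ℝ)
    (hx : BlockLT Φx) (hu : BlockLT Φu)
    (ΔA : Matrix (Fin n) (Fin n) ℝ) (ΔB : Matrix (Fin n) (Fin m) ℝ)
    (Φ : Matrix ((Fin (T+1) × Fin n) ⊕ (Fin (T+1) × Fin m)) (Fin (T+1) × Fin n) ℝ)
    (hΦ : Φ = Matrix.fromRows Φx Φu)
    (ΔM : Matrix (Fin (T+1) × Fin n) ((Fin (T+1) × Fin n) ⊕ (Fin (T+1) × Fin m)) ℝ)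
    (hΔM : ΔM = Matrix.fromCols (blkdiag T ΔA) (blkdiag T ΔB)) :
    (dshift T n * ΔM * Φ) ^ (T+1) = 0 ∧
    IsUnit (1 + dshift T n * ΔM * Φ) ∧
    IsUnit (1 + Φ * dshift T n * ΔM) :=
  stmt1_general Φx Φu hx hu ΔA ΔB Φ hΦ ΔM hΔM
end

section
/- Let Φ_x, Φ_u be block lower triangular satisfying (I − Z𝒜̂)Φ_x − Zℬ̂Φ_u = I, Φ = [Φ_x; Φ_u], ΔA = Â − A, ΔB = B̂ − B, Δℳ = [blkdiag_{T+1}(ΔA) blkdiag_{T+1}(ΔB)], and R_Φ = (I + ΦZΔℳ)⁻¹. Let x ∈ ℝ^{(T+1)n}, u ∈ ℝ^{(T+1)m} be arbitrary and define the true disturbance w = x − Z blkdiag_{T+1}(A) x − Z blkdiag_{T+1}(B) u and the nominal disturbance ŵ = x − Z𝒜̂x − Zℬ̂u. Then Φŵ − R_Φ Φ w = R_Φ Φ Z Δℳ (Φŵ − [x; u]). -/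
open MeasureTheory Matrix
open scoped ENNReal

/-! Write `N = Φ Z Δℳ`. The two disturbances differ by `w = ŵ + Z Δℳ [x; u]`, so the identity
reduces to `R_Φ N = 1 - R_Φ`, i.e. to `R_Φ (1 + N) = 1`. For this `1 + N` must be invertible:
`Φ` is block lower triangular, `Z` moves every block one step down and `Δℳ` is block diagonal,
so `N` is strictly block lower triangular and `det (1 + N) = 1`. -/

namespace Matrix

variable {ι κ R : Type*} [Fintype ι] [CommRing R]

theorem sub_mulVec_sub_mulVec_eq_add_mulVec_fromCols_sub {ι' : Type*} [Fintype ι'] [Fintype κ]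
    (Z : Matrix ι ι' R) (A Ahat : Matrix ι' ι R) (B Bhat : Matrix ι' κ R) (x : ι → R) (u : κ → R) :
    x - (Z * A) *ᵥ x - (Z * B) *ᵥ u
      = (x - (Z * Ahat) *ᵥ x - (Z * Bhat) *ᵥ u)
        + (Z * fromCols (Ahat - A) (Bhat - B)) *ᵥ Sum.elim x u := by
  simp only [← mulVec_mulVec, fromCols_mulVec_sumElim, sub_mulVec, mulVec_add, mulVec_sub]
  abel

variable [DecidableEq ι]

theorem det_one_add_eq_one_of_strictBlockLower {α : Type*} [LinearOrder α] {N : Matrix ι ι R}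
    (b : ι → α) (hN : ∀ i j, b i ≤ b j → N i j = 0) : (1 + N).det = 1 := by
  have htri : (1 + N).BlockTriangular (OrderDual.toDual ∘ b) := fun i j hij => by
    have hne : i ≠ j := fun h => hij.ne (by rw [h])
    simp [one_apply_ne hne, hN i j hij.le]
  rw [htri.det]
  refine Finset.prod_eq_one fun a _ => ?_
  have hblock : (1 + N).toSquareBlock (OrderDual.toDual ∘ b) a = 1 := by
    ext i j
    have hij : b i ≤ b j := (congrArg OrderDual.ofDual (i.2.trans j.2.symm)).le
    by_cases h : i = j
    · subst h; simp [toSquareBlock_def, hN _ _ hij]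
    · simp [toSquareBlock_def, one_apply_ne h, one_apply_ne (Subtype.coe_injective.ne h),
        hN _ _ hij]
  rw [hblock, det_one]

theorem mulVec_sub_mulVec_add_eq_of_mul_one_add_eq_one [Fintype κ] {Rinv : Matrix ι ι R}
    {Φ : Matrix ι κ R} {D : Matrix κ ι R} (h : Rinv * (1 + Φ * D) = 1) (v : κ → R)
    (y : ι → R) :
    Φ *ᵥ v - (Rinv * Φ) *ᵥ (v + D *ᵥ y) = (Rinv * Φ * D) *ᵥ (Φ *ᵥ v - y) := by
  have hRΦD : Rinv * Φ * D = 1 - Rinv := by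
    rw [Matrix.mul_assoc, eq_sub_iff_add_eq', ← h, Matrix.mul_add, Matrix.mul_one]
  rw [hRΦD, mulVec_add, mulVec_mulVec, hRΦD, mulVec_sub, sub_mulVec,
    sub_mulVec, one_mulVec, one_mulVec, ← mulVec_mulVec]
  abel

end Matrix

section BlockOperators

variable {T n m k : ℕ}

theorem dshift_apply_eq_zero {p q : Fin (T+1) × Fin n} (h : (p.1 : ℕ) ≠ q.1 + 1) :
    dshift T n p q = 0 :=
  if_neg fun hpq => h hpq.1

theorem blkdiag_apply_of_ne (M : Matrix (Fin n) (Fin k) ℝ) {p : Fin (T+1) × Fin n}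
    {q : Fin (T+1) × Fin k} (h : p.1 ≠ q.1) : blkdiag T M p q = 0 :=
  if_neg h

theorem blkdiag_sub (M M' : Matrix (Fin n) (Fin k) ℝ) :
    blkdiag T (M - M') = blkdiag T M - blkdiag T M' := by
  ext p q
  by_cases h : p.1 = q.1 <;> simp [blkdiag, h]

theorem BlockLT.mul_dshift_apply_eq_zero {M : Matrix (Fin (T+1) × Fin m) (Fin (T+1) × Fin n) ℝ}
    (hM : BlockLT M) {p : Fin (T+1) × Fin m} {r : Fin (T+1) × Fin n} (h : p.1 ≤ r.1) :
    (M * dshift T n) p r = 0 := by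
  rw [mul_apply]
  refine Finset.sum_eq_zero fun s _ => ?_
  by_cases hs : (s.1 : ℕ) = r.1 + 1
  · rw [hM p s (by rw [Fin.lt_def, hs]; exact Nat.lt_succ_of_le h), zero_mul]
  · rw [dshift_apply_eq_zero hs, mul_zero]

theorem fromRows_mul_dshift_mul_fromCols_blkdiag_apply_eq_zero
    {Φx : Matrix (Fin (T+1) × Fin n) (Fin (T+1) × Fin n) ℝ}
    {Φu : Matrix (Fin (T+1) × Fin m) (Fin (T+1) × Fin n) ℝ} (hx : BlockLT Φx) (hu : BlockLT Φu)
    (A : Matrix (Fin n) (Fin n) ℝ) (B : Matrix (Fin n) (Fin k) ℝ)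
    {p : (Fin (T+1) × Fin n) ⊕ (Fin (T+1) × Fin m)} {q : (Fin (T+1) × Fin n) ⊕ (Fin (T+1) × Fin k)}
    (h : Sum.elim Prod.fst Prod.fst p ≤ Sum.elim Prod.fst Prod.fst q) :
    (fromRows Φx Φu * dshift T n * fromCols (blkdiag T A) (blkdiag T B)) p q = 0 := by
  rw [mul_apply]
  refine Finset.sum_eq_zero fun r _ => ?_
  by_cases hr : r.1 = Sum.elim Prod.fst Prod.fst q
  · rw [fromRows_mul]
    rcases p with p | p
    · rw [fromRows_apply_inl, hx.mul_dshift_apply_eq_zero (hr ▸ h), zero_mul]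
    · rw [fromRows_apply_inr, hu.mul_dshift_apply_eq_zero (hr ▸ h), zero_mul]
  · rcases q with q | q
    · rw [fromCols_apply_inl, blkdiag_apply_of_ne _ hr, mul_zero]
    · rw [fromCols_apply_inr, blkdiag_apply_of_ne _ hr, mul_zero]

end BlockOperators

theorem stmt4_general {n m T : ℕ}
    (Ahat A : Matrix (Fin n) (Fin n) ℝ) (Bhat B : Matrix (Fin n) (Fin m) ℝ)
    (Φx : Matrix (Fin (T+1) × Fin n) (Fin (T+1) × Fin n) ℝ)
    (Φu : Matrix (Fin (T+1) × Fin m) (Fin (T+1) × Fin n) ℝ)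
    (hx : BlockLT Φx) (hu : BlockLT Φu)
    (Φ : Matrix ((Fin (T+1) × Fin n) ⊕ (Fin (T+1) × Fin m)) (Fin (T+1) × Fin n) ℝ)
    (hΦ : Φ = Matrix.fromRows Φx Φu)
    (ΔM : Matrix (Fin (T+1) × Fin n) ((Fin (T+1) × Fin n) ⊕ (Fin (T+1) × Fin m)) ℝ)
    (hΔM : ΔM = Matrix.fromCols (blkdiag T (Ahat - A)) (blkdiag T (Bhat - B)))
    (RΦ : Matrix ((Fin (T+1) × Fin n) ⊕ (Fin (T+1) × Fin m))
                 ((Fin (T+1) × Fin n) ⊕ (Fin (T+1) × Fin m)) ℝ)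
    (hR : RΦ = (1 + Φ * dshift T n * ΔM)⁻¹)
    (x : (Fin (T+1) × Fin n) → ℝ) (u : (Fin (T+1) × Fin m) → ℝ)
    (w what : (Fin (T+1) × Fin n) → ℝ)
    (hw : w = x - (dshift T n * blkdiag T A) *ᵥ x - (dshift T n * blkdiag T B) *ᵥ u)
    (hwhat : what = x - (dshift T n * blkdiag T Ahat) *ᵥ x
        - (dshift T n * blkdiag T Bhat) *ᵥ u) :
    Φ *ᵥ what - (RΦ * Φ) *ᵥ w
      = (RΦ * Φ * dshift T n * ΔM) *ᵥ (Φ *ᵥ what - Sum.elim x u) := by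
  have hRΦ : RΦ * (1 + Φ * (dshift T n * ΔM)) = 1 := by
    rw [hR, ← Matrix.mul_assoc]
    refine nonsing_inv_mul _ ?_
    rw [hΦ, hΔM, det_one_add_eq_one_of_strictBlockLower (Sum.elim Prod.fst Prod.fst)
      fun _ _ => fromRows_mul_dshift_mul_fromCols_blkdiag_apply_eq_zero hx hu _ _]
    exact isUnit_one
  have hw_what : w = what + (dshift T n * ΔM) *ᵥ Sum.elim x u := by
    rw [hw, hwhat, hΔM, blkdiag_sub, blkdiag_sub]
    exact sub_mulVec_sub_mulVec_eq_add_mulVec_fromCols_sub _ _ _ _ _ x u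
  rw [hw_what, Matrix.mul_assoc (RΦ * Φ)]
  exact mulVec_sub_mulVec_add_eq_of_mul_one_add_eq_one hRΦ what (Sum.elim x u)

/-- Algebraic identity behind Lemma 1: for any state-input data `(x, u)`,
with true disturbance `w` and nominal disturbance `ŵ`,
`Φŵ − R_Φ Φ w = R_Φ Φ Z Δℳ (Φŵ − [x; u])`. -/
theorem stmt4 {n m T : ℕ} (hn : 0 < n) (hm : 0 < m) (hT : 0 < T)
    (Ahat A : Matrix (Fin n) (Fin n) ℝ) (Bhat B : Matrix (Fin n) (Fin m) ℝ)
    (Φx : Matrix (Fin (T+1) × Fin n) (Fin (T+1) × Fin n) ℝ)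
    (Φu : Matrix (Fin (T+1) × Fin m) (Fin (T+1) × Fin n) ℝ)
    (hx : BlockLT Φx) (hu : BlockLT Φu)
    (hSLS : (1 - dshift T n * blkdiag T Ahat) * Φx - dshift T n * blkdiag T Bhat * Φu = 1)
    (Φ : Matrix ((Fin (T+1) × Fin n) ⊕ (Fin (T+1) × Fin m)) (Fin (T+1) × Fin n) ℝ)
    (hΦ : Φ = Matrix.fromRows Φx Φu)
    (ΔM : Matrix (Fin (T+1) × Fin n) ((Fin (T+1) × Fin n) ⊕ (Fin (T+1) × Fin m)) ℝ)
    (hΔM : ΔM = Matrix.fromCols (blkdiag T (Ahat - A)) (blkdiag T (Bhat - B)))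
    (RΦ : Matrix ((Fin (T+1) × Fin n) ⊕ (Fin (T+1) × Fin m))
                 ((Fin (T+1) × Fin n) ⊕ (Fin (T+1) × Fin m)) ℝ)
    (hR : RΦ = (1 + Φ * dshift T n * ΔM)⁻¹)
    (x : (Fin (T+1) × Fin n) → ℝ) (u : (Fin (T+1) × Fin m) → ℝ)
    (w what : (Fin (T+1) × Fin n) → ℝ)
    (hw : w = x - (dshift T n * blkdiag T A) *ᵥ x - (dshift T n * blkdiag T B) *ᵥ u)
    (hwhat : what = x - (dshift T n * blkdiag T Ahat) *ᵥ x
        - (dshift T n * blkdiag T Bhat) *ᵥ u) :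
    Φ *ᵥ what - (RΦ * Φ) *ᵥ w
      = (RΦ * Φ * dshift T n * ΔM) *ᵥ (Φ *ᵥ what - Sum.elim x u) :=
  stmt4_general Ahat A Bhat B Φx Φu hx hu Φ hΦ ΔM hΔM RΦ hR x u w what hw hwhat
end

section
/- (Distributionally robust upper bound for max-affine costs.) Let h(y) = max_{1 ≤ j ≤ J} (a_j · y + b_j) with a_j ∈ ℝ^d, b_j ∈ ℝ, set λ = max_{1 ≤ j ≤ J} ‖a_j‖_∞, let P̄ = (1/N)Σ_{i=1}^N δ_{ŷ^i} be a uniform empirical probability measure on points ŷ^1, …, ŷ^N ∈ ℝ^d, and let ε ≥ 0. Then for every probability measure Q on ℝ^d with finite first moment satisfying d_W(Q, P̄) ≤ ε, one has ∫ h dQ ≤ λ ε + (1/N)Σ_{i=1}^N h(ŷ^i). Equivalently, the supremum of E_Q[h] over the Wasserstein ball of radius ε centered at P̄ is at most λ ε + (1/N)Σ_i h(ŷ^i). -/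
open MeasureTheory Matrix
open scoped ENNReal

/-! The cost `h` is `λ`-Lipschitz for the ℓ¹-norm, by Hölder's inequality `a · v ≤ ‖a‖_∞ ‖v‖₁`
applied to each affine piece. Integrating `h x ≤ h y + λ ‖x - y‖₁` against any coupling of `Q`
and `P̄` gives `E_Q h ≤ E_P̄ h + λ E_π ‖x - y‖₁`, and taking the infimum over couplings replaces
the last expectation by `d_W(Q, P̄) ≤ ε`. -/

section L1Norm

variable {ι : Type*} [Fintype ι]

lemma l1norm_nonneg (v : ι → ℝ) : 0 ≤ l1norm v :=
  Finset.sum_nonneg fun i _ => abs_nonneg (v i)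

lemma l1norm_neg (v : ι → ℝ) : l1norm (-v) = l1norm v := by
  simp only [l1norm, Pi.neg_apply, abs_neg]

lemma l1norm_sub_le (x y : ι → ℝ) : l1norm (x - y) ≤ l1norm x + l1norm y := by
  rw [l1norm, l1norm, l1norm, ← Finset.sum_add_distrib]
  exact Finset.sum_le_sum fun i _ => abs_sub (x i) (y i)

@[fun_prop]
lemma continuous_l1norm : Continuous (l1norm : (ι → ℝ) → ℝ) :=
  continuous_finsetSum _ fun i _ => (continuous_apply i).abs

lemma sum_mul_le_iSup_abs_mul_l1norm (c v : ι → ℝ) :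
    ∑ i, c i * v i ≤ (⨆ i, |c i|) * l1norm v := by
  rw [l1norm, Finset.mul_sum]
  refine Finset.sum_le_sum fun i _ => ?_
  calc c i * v i ≤ |c i| * |v i| := by rw [← abs_mul]; exact le_abs_self _
    _ ≤ (⨆ i, |c i|) * |v i| :=
      mul_le_mul_of_nonneg_right (le_ciSup (f := fun i => |c i|) (Finite.bddAbove_range _) i)
        (abs_nonneg _)

end L1Norm

section Transport

variable {ι : Type*} [Fintype ι] {f : (ι → ℝ) → ℝ} {L : ℝ}

lemma integrable_of_le_add_mul_l1norm {μ : Measure (ι → ℝ)} [IsFiniteMeasure μ]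
    (hf_meas : Measurable f) (hf : ∀ x y, f x ≤ f y + L * l1norm (x - y))
    (hμ : Integrable l1norm μ) : Integrable f μ := by
  refine ((integrable_const |f 0|).add (hμ.const_mul L)).mono'
    hf_meas.aestronglyMeasurable (ae_of_all _ fun x => ?_)
  have hx := hf x 0
  have h0 := hf 0 x
  rw [sub_zero] at hx
  rw [zero_sub, l1norm_neg] at h0
  rw [Real.norm_eq_abs, Pi.add_apply, abs_le]
  constructor <;> linarith [neg_abs_le (f 0), le_abs_self (f 0)]

lemma integral_le_integral_add_mul_of_coupling {P Q : Measure (ι → ℝ)}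
    {π : Measure ((ι → ℝ) × (ι → ℝ))} (hπP : π.map Prod.fst = P) (hπQ : π.map Prod.snd = Q)
    (hf_meas : Measurable f) (hf : ∀ x y, f x ≤ f y + L * l1norm (x - y))
    (hfP : Integrable f P) (hfQ : Integrable f Q)
    (hP : Integrable l1norm P) (hQ : Integrable l1norm Q) :
    ∫ x, f x ∂P ≤ ∫ y, f y ∂Q + L * ∫ p, l1norm (p.1 - p.2) ∂π := by
  subst hπP hπQ
  have hfst : Integrable (fun p => f p.1) π := hfP.comp_measurable measurable_fst
  have hsnd : Integrable (fun p => f p.2) π := hfQ.comp_measurable measurable_snd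
  have hdist : Integrable (fun p : (ι → ℝ) × (ι → ℝ) => l1norm (p.1 - p.2)) π := by
    refine ((hP.comp_measurable measurable_fst).add (hQ.comp_measurable measurable_snd)).mono'
      (by fun_prop) (ae_of_all _ fun p => ?_)
    rw [Real.norm_eq_abs, abs_of_nonneg (l1norm_nonneg _)]
    exact l1norm_sub_le p.1 p.2
  rw [integral_map measurable_fst.aemeasurable hf_meas.aestronglyMeasurable,
    integral_map measurable_snd.aemeasurable hf_meas.aestronglyMeasurable,
    ← integral_const_mul, ← integral_add hsnd (hdist.const_mul L)]
  exact integral_mono hfst (hsnd.add (hdist.const_mul L)) fun p => hf p.1 p.2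

lemma integral_le_integral_add_mul_wass (P Q : Measure (ι → ℝ))
    [IsProbabilityMeasure P] [IsProbabilityMeasure Q] (hL : 0 ≤ L)
    (hf_meas : Measurable f) (hf : ∀ x y, f x ≤ f y + L * l1norm (x - y))
    (hP : Integrable l1norm P) (hQ : Integrable l1norm Q) :
    ∫ x, f x ∂P ≤ ∫ y, f y ∂Q + L * wass P Q := by
  have hfP := integrable_of_le_add_mul_l1norm hf_meas hf hP
  have hfQ := integrable_of_le_add_mul_l1norm hf_meas hf hQ
  have hprod : (P.prod Q).map Prod.fst = P ∧ (P.prod Q).map Prod.snd = Q := by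
    simp [Measure.map_fst_prod, Measure.map_snd_prod]
  rw [wass, ← smul_eq_mul, ← Real.sInf_smul_of_nonneg hL, ← sub_le_iff_le_add']
  refine le_csInf ⟨_, _, ⟨P.prod Q, inferInstance, hprod.1, hprod.2, rfl⟩, rfl⟩ ?_
  rintro _ ⟨_, ⟨π, -, hπP, hπQ, rfl⟩, rfl⟩
  rw [sub_le_iff_le_add']
  exact integral_le_integral_add_mul_of_coupling hπP hπQ hf_meas hf hfP hfQ hP hQ

end Transport

section Empirical

variable {ι : Type*} [Fintype ι] {N : ℕ} (y : Fin N → ι → ℝ)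

lemma isProbabilityMeasure_emp (hN : N ≠ 0) : IsProbabilityMeasure (emp y) := by
  constructor
  simp only [emp, Measure.smul_apply, Measure.coe_finsetSum, Finset.sum_apply,
    measure_univ, Finset.sum_const, Finset.card_univ, Fintype.card_fin, nsmul_eq_mul, mul_one,
    smul_eq_mul]
  exact ENNReal.inv_mul_cancel (Nat.cast_ne_zero.mpr hN) (ENNReal.natCast_ne_top N)

lemma integrable_emp (hN : N ≠ 0) (g : (ι → ℝ) → ℝ) : Integrable g (emp y) :=
  (integrable_finsetSum_measure.mpr fun k _ => integrable_dirac (by simp)).smul_measure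
    (ENNReal.inv_ne_top.mpr (Nat.cast_ne_zero.mpr hN))

lemma integral_emp (g : (ι → ℝ) → ℝ) : ∫ x, g x ∂(emp y) = (N : ℝ)⁻¹ * ∑ k, g (y k) := by
  rw [emp, integral_smul_measure,
    integral_finsetSum_measure fun k _ => integrable_dirac (by simp)]
  simp [integral_dirac]

end Empirical

section MaxAffine

variable {ι κ : Type*} [Fintype ι] [Fintype κ] (a : κ → ι → ℝ) (b : κ → ℝ)

noncomputable def maxAffine (y : ι → ℝ) : ℝ := ⨆ j, (∑ i, a j i * y i + b j)

lemma measurable_maxAffine : Measurable (maxAffine a b) :=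
  Measurable.iSup fun j => by fun_prop

lemma maxAffine_le_add_mul_l1norm [Nonempty κ] (x y : ι → ℝ) :
    maxAffine a b x ≤ maxAffine a b y + (⨆ j, ⨆ i, |a j i|) * l1norm (x - y) := by
  refine ciSup_le fun j => ?_
  have hpiece : ∑ i, a j i * y i + b j ≤ maxAffine a b y :=
    le_ciSup (f := fun j => ∑ i, a j i * y i + b j) (Finite.bddAbove_range _) j
  have hholder : ∑ i, a j i * (x - y) i ≤ (⨆ j, ⨆ i, |a j i|) * l1norm (x - y) :=
    (sum_mul_le_iSup_abs_mul_l1norm (a j) (x - y)).trans <|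
      mul_le_mul_of_nonneg_right
        (le_ciSup (f := fun j => ⨆ i, |a j i|) (Finite.bddAbove_range _) j) (l1norm_nonneg _)
  have hsplit : ∑ i, a j i * x i = ∑ i, a j i * y i + ∑ i, a j i * (x - y) i := by
    rw [← Finset.sum_add_distrib]
    exact Finset.sum_congr rfl fun i _ => by rw [Pi.sub_apply]; ring
  linarith

end MaxAffine

theorem stmt16_general {d J N : ℕ} (hJ : 0 < J) (hN : 0 < N)
    (a : Fin J → Fin d → ℝ) (b : Fin J → ℝ)
    (yhat : Fin N → Fin d → ℝ) (ε : ℝ)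
    (Q : Measure (Fin d → ℝ)) [IsProbabilityMeasure Q]
    (hQmom : Integrable (fun v => l1norm v) Q)
    (hball : wass Q (emp yhat) ≤ ε) :
    ∫ y, (⨆ j, (∑ i, a j i * y i + b j)) ∂Q
      ≤ (⨆ j, ⨆ i, |a j i|) * ε
        + (N : ℝ)⁻¹ * ∑ k, ⨆ j, (∑ i, a j i * yhat k i + b j) := by
  have : Nonempty (Fin J) := ⟨⟨0, hJ⟩⟩
  have := isProbabilityMeasure_emp yhat hN.ne'
  have hlam : 0 ≤ ⨆ j, ⨆ i, |a j i| :=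
    Real.iSup_nonneg fun j => Real.iSup_nonneg fun i => abs_nonneg (a j i)
  calc ∫ y, maxAffine a b y ∂Q
      ≤ ∫ y, maxAffine a b y ∂(emp yhat) + (⨆ j, ⨆ i, |a j i|) * wass Q (emp yhat) :=
        integral_le_integral_add_mul_wass Q (emp yhat) hlam (measurable_maxAffine a b)
          (maxAffine_le_add_mul_l1norm a b) hQmom (integrable_emp yhat hN.ne' _)
    _ ≤ (⨆ j, ⨆ i, |a j i|) * ε + (N : ℝ)⁻¹ * ∑ k, maxAffine a b (yhat k) := by
        rw [integral_emp, add_comm]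
        gcongr

/-- **Distributionally robust upper bound for max-affine costs.** For any
probability measure `Q` with finite first moment in the Wasserstein ball of radius `ε`
around the empirical measure of the points `ŷ¹, …, ŷᴺ`,
`∫ h dQ ≤ λ ε + (1/N) Σᵢ h(ŷⁱ)` where `λ = maxⱼ ‖aⱼ‖∞`. -/
theorem stmt16 {d J N : ℕ} (hJ : 0 < J) (hN : 0 < N)
    (a : Fin J → Fin d → ℝ) (b : Fin J → ℝ)
    (yhat : Fin N → Fin d → ℝ) (ε : ℝ) (hε : 0 ≤ ε)
    (Q : Measure (Fin d → ℝ)) [IsProbabilityMeasure Q]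
    (hQmom : Integrable (fun v => l1norm v) Q)
    (hball : wass Q (emp yhat) ≤ ε) :
    ∫ y, (⨆ j, (∑ i, a j i * y i + b j)) ∂Q
      ≤ (⨆ j, ⨆ i, |a j i|) * ε
        + (N : ℝ)⁻¹ * ∑ k, ⨆ j, (∑ i, a j i * yhat k i + b j) :=
  stmt16_general hJ hN a b yhat ε Q hQmom hball
end
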